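/- arXiv:1408.2099 — 4 statements merged into one kernel-verified Lean document; each statement's English description precedes it below -/
import Mathlib

section
/- Let γ>1 and η,ν≥0 be constants, and let ρ,p:ℝ×ℝ³→ℝ and v,B:ℝ×ℝ³→ℝ³ be smooth fields with ∇·B=0 satisfying the resistive viscous MHD system ∂_tρ+∇·(ρv)=0; ρ∂_tv+ρ(v·∇)v+∇p=J×B+νΔv; ∂_tp+v·∇p+γp∇·v=0; ∂_tB=∇×(v×B−ηJ), with J:=∇×B. Assume there is a compact set K⊂ℝ³ such that for every t the fields ρ(t,·), p(t,·), v(t,·), B(t,·) vanish outside K. Then, with E:=ρ|v|²/2+|B|²/2+p/(γ−1), the function t↦∫_{ℝ³}E(t,x)dx is differentiable and d/dt∫_{ℝ³}E = −η∫_{ℝ³}|J|² − ν∫_{ℝ³}|∇×v|² − ν∫_{ℝ³}|∇·v|² ≤ 0; in particular, if η=ν=0 the total energy is constant in time. -/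
noncomputable section
set_option linter.unusedVariables false

open MeasureTheory

/-- Points of ℝ³. -/
abbrev V3 := Fin 3 → ℝ

/-- Partial derivative `∂_i g` of a scalar field on ℝ³. -/
def pd (i : Fin 3) (g : V3 → ℝ) (x : V3) : ℝ := fderiv ℝ g x (Pi.single i 1)

/-- Divergence `∇·F = ∑ i ∂_i F_i`. -/
def divg (F : V3 → V3) (x : V3) : ℝ := ∑ i, pd i (fun y => F y i) x

/-- Curl `(∇×F)_i = ε_{ijk} ∂_j F_k`. -/
def curl (F : V3 → V3) (x : V3) : V3 :=
  ![pd 1 (fun y => F y 2) x - pd 2 (fun y => F y 1) x,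
    pd 2 (fun y => F y 0) x - pd 0 (fun y => F y 2) x,
    pd 0 (fun y => F y 1) x - pd 1 (fun y => F y 0) x]

/-- Componentwise Laplacian `Δg = ∑ j ∂_j ∂_j g`. -/
def lap (g : V3 → ℝ) (x : V3) : ℝ := ∑ j, pd j (fun y => pd j g y) x

/-- Advection `((v·∇)F)_i = ∑ j v_j ∂_j F_i`. -/
def adv (v F : V3 → V3) (x : V3) : V3 := fun i => ∑ j, v x j * pd j (fun y => F y i) x

/-- Euclidean cross product on ℝ³. -/
def cross (a b : V3) : V3 :=
  ![a 1 * b 2 - a 2 * b 1, a 2 * b 0 - a 0 * b 2, a 0 * b 1 - a 1 * b 0]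

/-- Euclidean dot product on ℝ³. -/
def dot (a b : V3) : ℝ := ∑ i, a i * b i

/-- Time derivative of a time-dependent scalar field. -/
def dt (f : ℝ → V3 → ℝ) (t : ℝ) (x : V3) : ℝ := deriv (fun s => f s x) t

/-- Joint smoothness (C^∞ in `(t,x)`) of a time-dependent scalar field. -/
def SmoothS (f : ℝ → V3 → ℝ) : Prop := ContDiff ℝ (⊤ : ℕ∞) fun q : ℝ × V3 => f q.1 q.2

/-- Joint smoothness (C^∞ in `(t,x)`) of a time-dependent vector field. -/
def SmoothV (F : ℝ → V3 → V3) : Prop := ContDiff ℝ (⊤ : ℕ∞) fun q : ℝ × V3 => F q.1 q.2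

/-- Total energy density `E = ρ|v|²/2 + |B|²/2 + p/(γ−1)`. -/
def Edens (γ : ℝ) (ρ p : ℝ → V3 → ℝ) (v B : ℝ → V3 → V3) : ℝ → V3 → ℝ := fun t y =>
  ρ t y * (∑ i, v t y i ^ 2) / 2 + (∑ i, B t y i ^ 2) / 2 + p t y / (γ - 1)

/-- Energy flux `v(ρ|v|²/2 + γp/(γ−1)) − (v×B)×B + η(J×B)` with `J = ∇×B`. -/
def eflux (γ η : ℝ) (ρ p : ℝ → V3 → ℝ) (v B : ℝ → V3 → V3) (t : ℝ) : V3 → V3 := fun y =>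
  (ρ t y * (∑ i, v t y i ^ 2) / 2 + γ * p t y / (γ - 1)) • v t y
    - cross (cross (v t y) (B t y)) (B t y)
    + η • cross (curl (B t) y) (B t y)

/-- Energy dissipation rate `−η∫|J|² − ν∫|∇×v|² − ν∫|∇·v|²`. -/
def dissip (η ν : ℝ) (v B : ℝ → V3 → V3) (t : ℝ) : ℝ :=
  -η * (∫ x : V3, ∑ i, curl (B t) x i ^ 2)
    - ν * (∫ x : V3, ∑ i, curl (v t) x i ^ 2)
    - ν * (∫ x : V3, divg (v t) x ^ 2)

/-!
Multiplying the mass equation by `|v|²/2`, the momentum equation by `v`, the induction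
equation by `B` and the pressure equation by `1/(γ-1)` and adding gives the local energy
balance `∂ₜE = -∇·(eflux) - η|J|² + ν v·Δv`, and `v·Δv = ∇·(viscousFlux v) - |∇×v|² - (∇·v)²`.
Divergences of compactly supported fields integrate to zero, and since all fields vanish
outside one compact set for all times, the energy may be differentiated under the integral
sign.
-/

open scoped ContDiff
open Function (support)

section PartialDerivatives

variable {f g : V3 → ℝ} {x : V3}

theorem pd_add (hf : DifferentiableAt ℝ f x) (hg : DifferentiableAt ℝ g x) (i : Fin 3) :
    pd i (fun y => f y + g y) x = pd i f x + pd i g x := by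
  simp [pd, fderiv_fun_add hf hg]

theorem pd_sub (hf : DifferentiableAt ℝ f x) (hg : DifferentiableAt ℝ g x) (i : Fin 3) :
    pd i (fun y => f y - g y) x = pd i f x - pd i g x := by
  simp [pd, fderiv_fun_sub hf hg]

theorem pd_mul (hf : DifferentiableAt ℝ f x) (hg : DifferentiableAt ℝ g x) (i : Fin 3) :
    pd i (fun y => f y * g y) x = pd i f x * g x + f x * pd i g x := by
  simp [pd, fderiv_fun_mul hf hg]
  ring

theorem pd_const_mul (hf : DifferentiableAt ℝ f x) (c : ℝ) (i : Fin 3) :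
    pd i (fun y => c * f y) x = c * pd i f x := by
  simp [pd, fderiv_const_mul hf]

theorem pd_div_const (hf : DifferentiableAt ℝ f x) (c : ℝ) (i : Fin 3) :
    pd i (fun y => f y / c) x = pd i f x / c := by
  simp_rw [div_eq_inv_mul, pd_const_mul hf]

theorem pd_pow (hf : DifferentiableAt ℝ f x) (n : ℕ) (i : Fin 3) :
    pd i (fun y => f y ^ n) x = n * f x ^ (n - 1) * pd i f x := by
  simp [pd, fderiv_fun_pow n hf, mul_assoc]

theorem pd_sum {ι : Type*} {s : Finset ι} {F : ι → V3 → ℝ}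
    (hF : ∀ k ∈ s, DifferentiableAt ℝ (F k) x) (i : Fin 3) :
    pd i (fun y => ∑ k ∈ s, F k y) x = ∑ k ∈ s, pd i (F k) x := by
  simp [pd, fderiv_fun_sum hF]

theorem pd_comm (hg : ContDiffAt ℝ 2 g x) (i j : Fin 3) :
    pd i (pd j g) x = pd j (pd i g) x := by
  have hd : DifferentiableAt ℝ (fderiv ℝ g) x :=
    (hg.fderiv_right (m := 1) le_rfl).differentiableAt one_ne_zero
  change fderiv ℝ (fun y => fderiv ℝ g y _) x _ = fderiv ℝ (fun y => fderiv ℝ g y _) x _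
  simp only [fderiv_clm_apply hd (differentiableAt_const _), fderiv_fun_const, Pi.zero_apply,
    ContinuousLinearMap.comp_zero, zero_add, ContinuousLinearMap.flip_apply]
  exact hg.isSymmSndFDerivAt (by simp) _ _

@[fun_prop]
theorem contDiff_pd (hg : ContDiff ℝ ∞ g) (i : Fin 3) : ContDiff ℝ ∞ (pd i g) :=
  (hg.fderiv_right le_rfl).clm_apply contDiff_const

theorem support_pd_subset (i : Fin 3) : support (pd i g) ⊆ tsupport g :=
  fun y hy => support_fderiv_subset ℝ fun h => hy (by simp [pd, h])

theorem integrable_pd (hg : ContDiff ℝ 1 g) (hc : HasCompactSupport g) (i : Fin 3) :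
    Integrable (pd i g) :=
  ((hg.continuous_fderiv one_ne_zero).clm_apply continuous_const).integrable_of_hasCompactSupport
    (hc.fderiv_apply ℝ _)

theorem integral_pd_eq_zero (hg : ContDiff ℝ 1 g) (hc : HasCompactSupport g) (i : Fin 3) :
    ∫ x, pd i g x = 0 := by
  have h := integral_mul_fderiv_eq_neg_fderiv_mul_of_integrable (μ := volume)
    (f := fun _ => (1 : ℝ)) (g := g) (v := Pi.single i 1) (by simp)
    (by simp only [one_mul]; exact integrable_pd hg hc i)
    (by simpa using hg.continuous.integrable_of_hasCompactSupport hc)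
    (fun _ _ => differentiableAt_const _) (fun _ _ => hg.differentiable one_ne_zero _)
  simpa [pd] using h

end PartialDerivatives

section VectorCalculus

variable {F G : V3 → V3} {x : V3}

@[fun_prop]
theorem contDiff_cross {n : WithTop ℕ∞} (hF : ContDiff ℝ n F) (hG : ContDiff ℝ n G) :
    ContDiff ℝ n fun y => cross (F y) (G y) :=
  contDiff_pi.2 fun i => by fin_cases i <;> simp [cross] <;> fun_prop

@[fun_prop]
theorem contDiff_curl (hF : ContDiff ℝ ∞ F) : ContDiff ℝ ∞ (curl F) :=
  contDiff_pi.2 fun i => by fin_cases i <;> simp [curl] <;> fun_prop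

@[fun_prop]
theorem contDiff_divg (hF : ContDiff ℝ ∞ F) : ContDiff ℝ ∞ (divg F) := by
  unfold divg; fun_prop

theorem pd_apply_eq_zero_of_notMem_tsupport (hx : x ∉ tsupport F) (i j : Fin 3) :
    pd i (fun y => F y j) x = 0 := by
  by_contra h
  exact hx (tsupport_comp_subset (g := fun v : V3 => v j) rfl F (support_pd_subset i h))

theorem support_divg_subset : support (divg F) ⊆ tsupport F := by
  intro y hy
  by_contra h
  exact hy (Finset.sum_eq_zero fun i _ => pd_apply_eq_zero_of_notMem_tsupport h i i)

theorem support_curl_subset : support (curl F) ⊆ tsupport F := by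
  intro y hy
  by_contra h
  refine hy (funext fun i => ?_)
  fin_cases i <;> simp [curl, pd_apply_eq_zero_of_notMem_tsupport h]

theorem divg_add (hF : DifferentiableAt ℝ F x) (hG : DifferentiableAt ℝ G x) :
    divg (fun y => F y + G y) x = divg F x + divg G x := by
  simp only [divg, Pi.add_apply, pd_add (differentiableAt_pi.1 hF _) (differentiableAt_pi.1 hG _),
    Finset.sum_add_distrib]

theorem divg_sub (hF : DifferentiableAt ℝ F x) (hG : DifferentiableAt ℝ G x) :
    divg (fun y => F y - G y) x = divg F x - divg G x := by
  simp only [divg, Pi.sub_apply, pd_sub (differentiableAt_pi.1 hF _) (differentiableAt_pi.1 hG _),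
    Finset.sum_sub_distrib]

theorem divg_smul {f : V3 → ℝ} (hf : DifferentiableAt ℝ f x) (hF : DifferentiableAt ℝ F x) :
    divg (fun y => f y • F y) x = ∑ i, pd i f x * F x i + f x * divg F x := by
  simp only [divg, Pi.smul_apply, smul_eq_mul, pd_mul hf (differentiableAt_pi.1 hF _),
    Finset.sum_add_distrib, Finset.mul_sum]

theorem divg_const_smul (hF : DifferentiableAt ℝ F x) (c : ℝ) :
    divg (fun y => c • F y) x = c * divg F x := by
  simp only [divg, Pi.smul_apply, smul_eq_mul, pd_const_mul (differentiableAt_pi.1 hF _),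
    Finset.mul_sum]

theorem curl_sub (hF : DifferentiableAt ℝ F x) (hG : DifferentiableAt ℝ G x) :
    curl (fun y => F y - G y) x = curl F x - curl G x := by
  have h := fun i => pd_sub (differentiableAt_pi.1 hF i) (differentiableAt_pi.1 hG i)
  ext i; fin_cases i <;> simp [curl, h] <;> ring

theorem curl_const_smul (hF : DifferentiableAt ℝ F x) (c : ℝ) :
    curl (fun y => c • F y) x = c • curl F x := by
  have h := fun i => pd_const_mul (differentiableAt_pi.1 hF i) c
  ext i; fin_cases i <;> simp [curl, h] <;> ring

theorem divg_cross (hF : DifferentiableAt ℝ F x) (hG : DifferentiableAt ℝ G x) :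
    divg (fun y => cross (F y) (G y)) x = dot (G x) (curl F x) - dot (F x) (curl G x) := by
  have hF' := differentiableAt_pi.1 hF
  have hG' := differentiableAt_pi.1 hG
  have h (i a b c d : Fin 3) : pd i (fun y => F y a * G y b - F y c * G y d) x
      = pd i (fun y => F y a) x * G x b + F x a * pd i (fun y => G y b) x
        - (pd i (fun y => F y c) x * G x d + F x c * pd i (fun y => G y d) x) := by
    rw [pd_sub ((hF' a).fun_mul (hG' b)) ((hF' c).fun_mul (hG' d)), pd_mul (hF' a) (hG' b),
      pd_mul (hF' c) (hG' d)]
  simp only [divg, cross, dot, curl, Fin.sum_univ_three, Matrix.cons_val_zero, Matrix.cons_val_one,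
    Matrix.cons_val_two, Matrix.head_cons, Matrix.tail_cons, h]
  ring

theorem integral_divg_eq_zero (hF : ContDiff ℝ 1 F) (hc : HasCompactSupport F) :
    ∫ x, divg F x = 0 := by
  have hFi : ∀ i, ContDiff ℝ 1 fun y => F y i := contDiff_pi.1 hF
  have hci : ∀ i, HasCompactSupport fun y => F y i :=
    fun i => hc.comp_left (g := fun v : V3 => v i) rfl
  simp only [divg]
  rw [integral_finsetSum _ fun i _ => integrable_pd (hFi i) (hci i) i]
  exact Finset.sum_eq_zero fun i _ => integral_pd_eq_zero (hFi i) (hci i) i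

def viscousFlux (u : V3 → V3) (y : V3) : V3 :=
  fun k => ∑ i, u y i * pd k (fun z => u z i) y - adv u u y k + u y k * divg u y

@[fun_prop]
theorem contDiff_viscousFlux {u : V3 → V3} (hu : ContDiff ℝ ∞ u) :
    ContDiff ℝ ∞ (viscousFlux u) :=
  contDiff_pi.2 fun k => by simp only [viscousFlux, adv]; fun_prop

theorem sum_mul_lap_eq_divg_viscousFlux {u : V3 → V3} (hu : ContDiff ℝ ∞ u) (x : V3) :
    ∑ i, u x i * lap (fun y => u y i) x
      = divg (viscousFlux u) x - ∑ i, curl u x i ^ 2 - divg u x ^ 2 := by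
  have hs : ∀ i, ContDiff ℝ ∞ fun y => u y i := contDiff_pi.1 hu
  have D : ∀ {g : V3 → ℝ}, ContDiff ℝ ∞ g → DifferentiableAt ℝ g x :=
    fun hg => hg.differentiable (by simp) x
  have hA (k : Fin 3) : pd k (fun y => ∑ i, u y i * pd k (fun z => u z i) y) x
      = ∑ i, (pd k (fun z => u z i) x * pd k (fun z => u z i) x
          + u x i * pd k (pd k fun z => u z i) x) := by
    rw [pd_sum fun i _ => (D (hs i)).fun_mul (D (contDiff_pd (hs i) k))]
    exact Finset.sum_congr rfl fun i _ => pd_mul (D (hs i)) (D (contDiff_pd (hs i) k)) k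
  have hB (k : Fin 3) : pd k (fun y => adv u u y k) x
      = ∑ j, (pd k (fun z => u z j) x * pd j (fun z => u z k) x
          + u x j * pd k (pd j fun z => u z k) x) := by
    simp only [adv]
    rw [pd_sum fun j _ => (D (hs j)).fun_mul (D (contDiff_pd (hs k) j))]
    exact Finset.sum_congr rfl fun j _ => pd_mul (D (hs j)) (D (contDiff_pd (hs k) j)) k
  have hC (k : Fin 3) : pd k (fun y => u y k * divg u y) x
      = pd k (fun z => u z k) x * divg u x + u x k * ∑ j, pd k (pd j fun z => u z j) x := by
    rw [pd_mul (D (hs k)) (D (contDiff_divg hu)),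
      show divg u = fun y => ∑ j, pd j (fun z => u z j) y from rfl,
      pd_sum fun j _ => D (contDiff_pd (hs j) j)]
  have hflux (k : Fin 3) : pd k (fun y => viscousFlux u y k) x
      = pd k (fun y => ∑ i, u y i * pd k (fun z => u z i) y) x - pd k (fun y => adv u u y k) x
        + pd k (fun y => u y k * divg u y) x := by
    have hA' : ContDiff ℝ ∞ fun y => ∑ i, u y i * pd k (fun z => u z i) y := by fun_prop
    have hB' : ContDiff ℝ ∞ fun y => adv u u y k := by simp only [adv]; fun_prop
    rw [← pd_sub (D hA') (D hB'), ← pd_add ((D hA').fun_sub (D hB')) ((D (hs k)).fun_mul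
      (D (contDiff_divg hu)))]
    rfl
  rw [divg]
  simp only [hflux, hA, hB, hC]
  simp only [lap, curl, divg, Fin.sum_univ_three, Matrix.cons_val_zero, Matrix.cons_val_one,
    Matrix.cons_val_two, Matrix.head_cons, Matrix.tail_cons]
  have hc (i j k : Fin 3) :=
    pd_comm ((hs i).contDiffAt (x := x) |>.of_le (m := 2) (by decide)) j k
  rw [hc 1 1 0, hc 2 2 0, hc 2 2 1, hc 0 1 0, hc 0 2 0, hc 1 2 1]
  ring

end VectorCalculus

theorem hasDerivAt_integral_of_contDiff {E : Type*} [NormedAddCommGroup E] [NormedSpace ℝ E]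
    [MeasurableSpace E] [OpensMeasurableSpace E] {μ : Measure E} [IsFiniteMeasureOnCompacts μ]
    {F : ℝ → E → ℝ} (hF : ContDiff ℝ 1 (Function.uncurry F)) {K : Set E} (hK : IsCompact K)
    (hFK : ∀ s, ∀ x ∉ K, F s x = 0) (t : ℝ) :
    HasDerivAt (fun s => ∫ x, F s x ∂μ) (∫ x, deriv (fun s => F s x) t ∂μ) t := by
  have hF' (s : ℝ) (x : E) :
      HasDerivAt (fun s => F s x) (fderiv ℝ (Function.uncurry F) (s, x) (1, 0)) s :=
    (hF.differentiable one_ne_zero _).hasFDerivAt.comp_hasDerivAt s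
      ((hasDerivAt_id s).prodMk (hasDerivAt_const s x))
  have hcont : Continuous fun q : ℝ × E => fderiv ℝ (Function.uncurry F) q (1, 0) :=
    (hF.continuous_fderiv one_ne_zero).clm_apply continuous_const
  have hslice (s : ℝ) : Continuous (F s) :=
    hF.continuous.comp (continuous_const.prodMk continuous_id)
  obtain ⟨M, hM⟩ := (isCompact_Icc (a := t - 1) (b := t + 1)).prod hK
    |>.exists_bound_of_continuousOn hcont.continuousOn
  have hbound : ∀ x, ∀ s ∈ Metric.ball t 1,
      ‖fderiv ℝ (Function.uncurry F) (s, x) (1, 0)‖ ≤ K.indicator (fun _ => M) x := by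
    intro x s hs
    by_cases hx : x ∈ K
    · rw [Set.indicator_of_mem hx]
      rw [Real.ball_eq_Ioo] at hs
      exact hM (s, x) ⟨Set.Ioo_subset_Icc_self hs, hx⟩
    · have hzero : (fun s => F s x) = fun _ => 0 := funext fun s => hFK s x hx
      rw [Set.indicator_of_notMem hx, ← (hF' s x).deriv, hzero, deriv_const, norm_zero]
  have h := hasDerivAt_integral_of_dominated_loc_of_deriv_le (μ := μ)
    (Metric.ball_mem_nhds t one_pos)
    (Filter.Eventually.of_forall fun s => (hslice s).aestronglyMeasurable)
    ((hslice t).integrable_of_hasCompactSupport (HasCompactSupport.intro hK (hFK t)))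
    (hcont.comp (continuous_const.prodMk continuous_id)).aestronglyMeasurable
    (Filter.Eventually.of_forall (hbound ·))
    ((integrable_indicator_iff hK.measurableSet).2 (integrableOn_const hK.measure_lt_top.ne))
    (Filter.Eventually.of_forall fun x s _ => hF' s x)
  simpa only [(hF' t _).deriv] using h.2

theorem SmoothS.contDiff_slice {f : ℝ → V3 → ℝ} (hf : SmoothS f) (t : ℝ) :
    ContDiff ℝ ∞ (f t) :=
  hf.comp (contDiff_const.prodMk contDiff_id)

theorem SmoothV.contDiff_slice {F : ℝ → V3 → V3} (hF : SmoothV F) (t : ℝ) :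
    ContDiff ℝ ∞ (F t) :=
  hF.comp (contDiff_const.prodMk contDiff_id)

theorem SmoothV.apply {F : ℝ → V3 → V3} (hF : SmoothV F) (i : Fin 3) :
    SmoothS fun s y => F s y i :=
  contDiff_pi.1 hF i

theorem SmoothS.hasDerivAt_dt {f : ℝ → V3 → ℝ} (hf : SmoothS f) (t : ℝ) (x : V3) :
    HasDerivAt (fun s => f s x) (dt f t x) t :=
  ((hf.comp (contDiff_id.prodMk contDiff_const)).differentiable (by simp) t).hasDerivAt

section Energy

variable {γ η ν : ℝ} {ρ p : ℝ → V3 → ℝ} {v B : ℝ → V3 → V3}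

theorem smoothS_Edens (hρ : SmoothS ρ) (hp : SmoothS p) (hv : SmoothV v) (hB : SmoothV B) :
    SmoothS (Edens γ ρ p v B) := by
  unfold SmoothS SmoothV Edens at *
  fun_prop

theorem contDiff_eflux (hρ : SmoothS ρ) (hp : SmoothS p) (hv : SmoothV v) (hB : SmoothV B)
    (t : ℝ) : ContDiff ℝ ∞ (eflux γ η ρ p v B t) := by
  have := hρ.contDiff_slice t
  have := hp.contDiff_slice t
  have := hv.contDiff_slice t
  have := hB.contDiff_slice t
  unfold eflux
  fun_prop

theorem dt_Edens (hρ : SmoothS ρ) (hp : SmoothS p) (hv : SmoothV v) (hB : SmoothV B)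
    (t : ℝ) (x : V3) :
    dt (Edens γ ρ p v B) t x
      = dt ρ t x * (∑ i, v t x i ^ 2) / 2 + ρ t x * ∑ i, v t x i * dt (fun s y => v s y i) t x
        + ∑ i, B t x i * dt (fun s y => B s y i) t x + dt p t x / (γ - 1) := by
  have hv' (i : Fin 3) := (hv.apply i).hasDerivAt_dt t x
  have hB' (i : Fin 3) := (hB.apply i).hasDerivAt_dt t x
  have h := ((((hρ.hasDerivAt_dt t x).fun_mul (HasDerivAt.fun_sum (u := Finset.univ)
    fun i _ => (hv' i).fun_pow 2)).div_const 2).fun_add ((HasDerivAt.fun_sum (u := Finset.univ)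
    fun i _ => (hB' i).fun_pow 2).div_const 2)).fun_add ((hp.hasDerivAt_dt t x).div_const (γ - 1))
  refine h.deriv.trans ?_
  simp only [Fin.sum_univ_three]
  ring

theorem dt_Edens_eq_neg_divg_eflux (hγ : γ ≠ 1) (hρ : SmoothS ρ) (hp : SmoothS p)
    (hv : SmoothV v) (hB : SmoothV B) {t : ℝ} {x : V3}
    (hmass : dt ρ t x + divg (fun y i => ρ t y * v t y i) x = 0)
    (hmom : ∀ i, ρ t x * dt (fun s y => v s y i) t x + ρ t x * adv (v t) (v t) x i
        + pd i (p t) x = cross (curl (B t) x) (B t x) i + ν * lap (fun y => v t y i) x)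
    (hpres : dt p t x + (∑ i, v t x i * pd i (p t) x) + γ * p t x * divg (v t) x = 0)
    (hind : ∀ i, dt (fun s y => B s y i) t x
        = curl (fun y => cross (v t y) (B t y) - η • curl (B t) y) x i) :
    dt (Edens γ ρ p v B) t x = -divg (eflux γ η ρ p v B t) x - η * ∑ i, curl (B t) x i ^ 2
      + ν * ∑ i, v t x i * lap (fun y => v t y i) x := by
  have hρt := hρ.contDiff_slice t
  have hpt := hp.contDiff_slice t
  have hvt := hv.contDiff_slice t
  have hBt := hB.contDiff_slice t
  have D : ∀ {E : Type} [NormedAddCommGroup E] [NormedSpace ℝ E] {g : V3 → E},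
      ContDiff ℝ ∞ g → DifferentiableAt ℝ g x := fun hg => hg.differentiable (by simp) x
  have hgrad (i : Fin 3) :
      pd i (fun y => ρ t y * (∑ j, v t y j ^ 2) / 2 + γ * p t y / (γ - 1)) x
        = pd i (ρ t) x * (∑ j, v t x j ^ 2) / 2
          + ρ t x * ∑ j, v t x j * pd i (fun y => v t y j) x + γ * pd i (p t) x / (γ - 1) := by
    have hvj (j : Fin 3) : ContDiff ℝ ∞ fun y => v t y j := by fun_prop
    rw [pd_add (D (by fun_prop)) (D (by fun_prop)), pd_div_const (D (by fun_prop)),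
      pd_div_const (D (by fun_prop)), pd_mul (D hρt) (D (by fun_prop)), pd_const_mul (D hpt),
      pd_sum fun j _ => (D (hvj j)).fun_pow 2]
    simp only [pd_pow (D (hvj _)), Fin.sum_univ_three]
    ring
  have hflux : divg (eflux γ η ρ p v B t) x
      = ∑ i, pd i (fun y => ρ t y * (∑ j, v t y j ^ 2) / 2 + γ * p t y / (γ - 1)) x * v t x i
        + (ρ t x * (∑ j, v t x j ^ 2) / 2 + γ * p t x / (γ - 1)) * divg (v t) x
        - (dot (B t x) (curl (fun y => cross (v t y) (B t y)) x)
          - dot (cross (v t x) (B t x)) (curl (B t) x))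
        + η * (dot (B t x) (curl (curl (B t)) x) - dot (curl (B t) x) (curl (B t) x)) := by
    unfold eflux
    rw [divg_add (D (by fun_prop)) (D (by fun_prop)), divg_sub (D (by fun_prop)) (D (by fun_prop)),
      divg_smul (D (by fun_prop)) (D hvt), divg_cross (D (by fun_prop)) (D hBt),
      divg_const_smul (D (by fun_prop)), divg_cross (D (by fun_prop)) (D hBt)]
  have hmass' : divg (fun y i => ρ t y * v t y i) x
      = ∑ i, pd i (ρ t) x * v t x i + ρ t x * divg (v t) x :=
    divg_smul (D hρt) (D hvt)
  have hind' (i : Fin 3) : dt (fun s y => B s y i) t x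
      = curl (fun y => cross (v t y) (B t y)) x i - η * curl (curl (B t)) x i := by
    rw [hind i, curl_sub (D (by fun_prop)) (D (by fun_prop)), curl_const_smul (D (by fun_prop))]
    rfl
  -- the pressure-gradient terms cancel only through `γ/(γ-1) - 1/(γ-1) = 1`
  have hγ' : (γ - 1) * (γ - 1)⁻¹ = 1 := mul_inv_cancel₀ (sub_ne_zero.2 hγ)
  rw [dt_Edens hρ hp hv hB, hflux]
  rw [hmass'] at hmass
  simp only [hgrad, hind']
  have hm0 := hmom 0
  have hm1 := hmom 1
  have hm2 := hmom 2
  simp only [adv, dot, cross, Fin.sum_univ_three, Matrix.cons_val_zero, Matrix.cons_val_one,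
    Matrix.cons_val_two, Matrix.head_cons, Matrix.tail_cons] at hmass hm0 hm1 hm2 hpres ⊢
  linear_combination ((v t x 0 ^ 2 + v t x 1 ^ 2 + v t x 2 ^ 2) / 2) * hmass
    + v t x 0 * hm0 + v t x 1 * hm1 + v t x 2 * hm2 + (γ - 1)⁻¹ * hpres
    + (v t x 0 * pd 0 (p t) x + v t x 1 * pd 1 (p t) x + v t x 2 * pd 2 (p t) x) * hγ'

theorem integral_dt_Edens_eq_dissip (hγ : γ ≠ 1) (hρ : SmoothS ρ) (hp : SmoothS p)
    (hv : SmoothV v) (hB : SmoothV B)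
    (hmass : ∀ t x, dt ρ t x + divg (fun y i => ρ t y * v t y i) x = 0)
    (hmom : ∀ t x i, ρ t x * dt (fun s y => v s y i) t x + ρ t x * adv (v t) (v t) x i
        + pd i (p t) x = cross (curl (B t) x) (B t x) i + ν * lap (fun y => v t y i) x)
    (hpres : ∀ t x, dt p t x + (∑ i, v t x i * pd i (p t) x) + γ * p t x * divg (v t) x = 0)
    (hind : ∀ t x i, dt (fun s y => B s y i) t x
        = curl (fun y => cross (v t y) (B t y) - η • curl (B t) y) x i)
    {K : Set V3} (hK : IsCompact K)
    (hsupp : ∀ t x, x ∉ K → ρ t x = 0 ∧ p t x = 0 ∧ v t x = 0 ∧ B t x = 0) (t : ℝ) :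
    ∫ x, dt (Edens γ ρ p v B) t x = dissip η ν v B t := by
  have hvt := hv.contDiff_slice t
  have hBt := hB.contDiff_slice t
  set flux : V3 → V3 := fun y => ν • viscousFlux (v t) y - eflux γ η ρ p v B t y
  have hflux : ContDiff ℝ ∞ flux := by
    have := contDiff_eflux (γ := γ) (η := η) hρ hp hv hB t
    fun_prop
  have hflux_supp : HasCompactSupport flux := HasCompactSupport.intro hK fun y hy => by
    obtain ⟨hρ0, hp0, hv0, hB0⟩ := hsupp t y hy
    have hvisc : viscousFlux (v t) y = 0 := by ext k; simp [viscousFlux, adv, hv0]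
    ext k; fin_cases k <;> simp [flux, hvisc, eflux, cross, hρ0, hp0, hv0, hB0]
  have hvc : HasCompactSupport (v t) := .intro hK fun y hy => (hsupp t y hy).2.2.1
  have hBc : HasCompactSupport (B t) := .intro hK fun y hy => (hsupp t y hy).2.2.2
  have hbalance (x : V3) : dt (Edens γ ρ p v B) t x
      = (-η * ∑ i, curl (B t) x i ^ 2 - ν * ∑ i, curl (v t) x i ^ 2 - ν * divg (v t) x ^ 2)
        + divg flux x := by
    have D : ∀ {g : V3 → V3}, ContDiff ℝ ∞ g → DifferentiableAt ℝ g x :=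
      fun hg => hg.differentiable (by simp) x
    rw [dt_Edens_eq_neg_divg_eflux hγ hρ hp hv hB (hmass t x) (hmom t x) (hpres t x) (hind t x),
      sum_mul_lap_eq_divg_viscousFlux hvt,
      divg_sub (D (by fun_prop)) (D (contDiff_eflux hρ hp hv hB t)),
      divg_const_smul (D (by fun_prop))]
    ring
  have hJ : Integrable fun x => -η * ∑ i, curl (B t) x i ^ 2 :=
    (by fun_prop : ContDiff ℝ ∞ _).continuous.integrable_of_hasCompactSupport
      (hBc.mono' fun x hx => support_curl_subset fun h => hx (by simp [h]))
  have hω : Integrable fun x => ν * ∑ i, curl (v t) x i ^ 2 :=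
    (by fun_prop : ContDiff ℝ ∞ _).continuous.integrable_of_hasCompactSupport
      (hvc.mono' fun x hx => support_curl_subset fun h => hx (by simp [h]))
  have hθ : Integrable fun x => ν * divg (v t) x ^ 2 :=
    (by fun_prop : ContDiff ℝ ∞ _).continuous.integrable_of_hasCompactSupport
      (hvc.mono' fun x hx => support_divg_subset fun h => hx (by simp [h]))
  have hJω : Integrable fun x => -η * ∑ i, curl (B t) x i ^ 2 - ν * ∑ i, curl (v t) x i ^ 2 :=
    hJ.sub hω
  have hdens : Integrable fun x => -η * ∑ i, curl (B t) x i ^ 2 - ν * ∑ i, curl (v t) x i ^ 2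
      - ν * divg (v t) x ^ 2 :=
    hJω.sub hθ
  have hdiv : Integrable (divg flux) :=
    (contDiff_divg hflux).continuous.integrable_of_hasCompactSupport
      (hflux_supp.mono' support_divg_subset)
  rw [integral_congr_ae (Filter.Eventually.of_forall hbalance), integral_add hdens hdiv,
    integral_divg_eq_zero (hflux.of_le (by decide)) hflux_supp, add_zero, integral_sub hJω hθ,
    integral_sub hJ hω, integral_const_mul, integral_const_mul, integral_const_mul, dissip]

theorem dissip_nonpos (hη : 0 ≤ η) (hν : 0 ≤ ν) (t : ℝ) : dissip η ν v B t ≤ 0 := by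
  have h1 : 0 ≤ ∫ x, ∑ i, curl (B t) x i ^ 2 := integral_nonneg fun x => by positivity
  have h2 : 0 ≤ ∫ x, ∑ i, curl (v t) x i ^ 2 := integral_nonneg fun x => by positivity
  have h3 : 0 ≤ ∫ x, divg (v t) x ^ 2 := integral_nonneg fun x => by positivity
  rw [dissip]
  nlinarith [mul_nonneg hη h1, mul_nonneg hν h2, mul_nonneg hν h3]

end Energy

theorem mhd_total_energy_dissipation_general (γ η ν : ℝ) (hγ : 1 < γ) (hη : 0 ≤ η) (hν : 0 ≤ ν)
    (ρ p : ℝ → V3 → ℝ) (v B : ℝ → V3 → V3)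
    (hρ : SmoothS ρ) (hp : SmoothS p) (hv : SmoothV v) (hB : SmoothV B)
    (hmass : ∀ t x, dt ρ t x + divg (fun y i => ρ t y * v t y i) x = 0)
    (hmom : ∀ t x (i : Fin 3),
      ρ t x * dt (fun s y => v s y i) t x + ρ t x * adv (v t) (v t) x i
          + pd i (p t) x
        = cross (curl (B t) x) (B t x) i + ν * lap (fun y => v t y i) x)
    (hpres : ∀ t x,
      dt p t x + (∑ i, v t x i * pd i (p t) x) + γ * p t x * divg (v t) x = 0)
    (hind : ∀ t x (i : Fin 3),
      dt (fun s y => B s y i) t x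
        = curl (fun y => cross (v t y) (B t y) - η • curl (B t) y) x i)
    (K : Set V3) (hK : IsCompact K)
    (hsupp : ∀ t x, x ∉ K → ρ t x = 0 ∧ p t x = 0 ∧ v t x = 0 ∧ B t x = 0) :
    (∀ t : ℝ,
      HasDerivAt (fun s => ∫ x : V3, Edens γ ρ p v B s x) (dissip η ν v B t) t
        ∧ dissip η ν v B t ≤ 0) ∧
    (η = 0 → ν = 0 → ∀ t₁ t₂ : ℝ,
      (∫ x : V3, Edens γ ρ p v B t₁ x) = ∫ x : V3, Edens γ ρ p v B t₂ x) := by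
  have hderiv (t : ℝ) :
      HasDerivAt (fun s => ∫ x, Edens γ ρ p v B s x) (dissip η ν v B t) t :=
    integral_dt_Edens_eq_dissip hγ.ne' hρ hp hv hB hmass hmom hpres hind hK hsupp t ▸
      hasDerivAt_integral_of_contDiff ((smoothS_Edens hρ hp hv hB).of_le (by decide)) hK
        (fun s y hy => by simp [Edens, hsupp s y hy]) t
  refine ⟨fun t => ⟨hderiv t, dissip_nonpos hη hν t⟩, fun hη0 hν0 t₁ t₂ => ?_⟩
  have hzero (t : ℝ) : dissip η ν v B t = 0 := by simp [dissip, hη0, hν0]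
  exact is_const_of_deriv_eq_zero (fun t => (hderiv t).differentiableAt)
    (fun t => (hderiv t).deriv.trans (hzero t)) t₁ t₂

/-- for compactly supported smooth solutions of resistive viscous MHD,
the total energy is differentiable in time, its derivative is the (nonpositive)
dissipation, and it is conserved in the ideal case `η = ν = 0`. -/
theorem mhd_total_energy_dissipation (γ η ν : ℝ) (hγ : 1 < γ) (hη : 0 ≤ η) (hν : 0 ≤ ν)
    (ρ p : ℝ → V3 → ℝ) (v B : ℝ → V3 → V3)
    (hρ : SmoothS ρ) (hp : SmoothS p) (hv : SmoothV v) (hB : SmoothV B)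
    (hdivB : ∀ t x, divg (B t) x = 0)
    (hmass : ∀ t x, dt ρ t x + divg (fun y i => ρ t y * v t y i) x = 0)
    (hmom : ∀ t x (i : Fin 3),
      ρ t x * dt (fun s y => v s y i) t x + ρ t x * adv (v t) (v t) x i
          + pd i (p t) x
        = cross (curl (B t) x) (B t x) i + ν * lap (fun y => v t y i) x)
    (hpres : ∀ t x,
      dt p t x + (∑ i, v t x i * pd i (p t) x) + γ * p t x * divg (v t) x = 0)
    (hind : ∀ t x (i : Fin 3),
      dt (fun s y => B s y i) t x
        = curl (fun y => cross (v t y) (B t y) - η • curl (B t) y) x i)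
    (K : Set V3) (hK : IsCompact K)
    (hsupp : ∀ t x, x ∉ K → ρ t x = 0 ∧ p t x = 0 ∧ v t x = 0 ∧ B t x = 0) :
    (∀ t : ℝ,
      HasDerivAt (fun s => ∫ x : V3, Edens γ ρ p v B s x) (dissip η ν v B t) t
        ∧ dissip η ν v B t ≤ 0) ∧
    (η = 0 → ν = 0 → ∀ t₁ t₂ : ℝ,
      (∫ x : V3, Edens γ ρ p v B t₁ x) = ∫ x : V3, Edens γ ρ p v B t₂ x) :=
  mhd_total_energy_dissipation_general γ η ν hγ hη hν ρ p v B hρ hp hv hB hmass hmom hpres hind K hK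
    hsupp
end
end

section
/- Let F0∈ℝ and let ψ,u be smooth functions of (t,R,φ,Z) on ℝ×{R>0}×ℝ×ℝ satisfying the ideal reduced flux equation ∂_tψ = R[ψ,u] − F0∂_φu. Define B := ((1/R)∂_Zψ)e_R+(F0/R)e_φ+(−(1/R)∂_Rψ)e_Z (i.e. B=(F0/R)e_φ+(1/R)∇ψ×e_φ) and v := (−R∂_Zu)e_R+(R∂_Ru)e_Z (i.e. v=−R∇u×e_φ). Then the ideal induction equation holds componentwise: ∂_tB = ∇×(v×B). -/
noncomputable section
set_option linter.unusedVariables false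

open Real

/-- Scalar fields as functions of `(t, R, φ, Z)`. -/
abbrev F4 := ℝ → ℝ → ℝ → ℝ → ℝ

/-- Partial derivative in time `t`. -/
def dT (f : F4) (t R φ Z : ℝ) : ℝ := deriv (fun s => f s R φ Z) t

/-- Partial derivative in `R`. -/
def dR (f : F4) (t R φ Z : ℝ) : ℝ := deriv (fun r => f t r φ Z) R

/-- Partial derivative in `φ`. -/
def dP (f : F4) (t R φ Z : ℝ) : ℝ := deriv (fun a => f t R a Z) φ

/-- Partial derivative in `Z`. -/
def dZ (f : F4) (t R φ Z : ℝ) : ℝ := deriv (fun z => f t R φ z) Z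

/-- Joint smoothness (C^∞) in `(t,R,φ,Z)`. -/
def Smooth4 (f : F4) : Prop :=
  ContDiff ℝ (⊤ : ℕ∞) fun q : ℝ × ℝ × ℝ × ℝ => f q.1 q.2.1 q.2.2.1 q.2.2.2

/-- Poisson bracket `[a,b] = ∂_R a ∂_Z b − ∂_Z a ∂_R b` (spatial). -/
def pb (a b : F4) (t R φ Z : ℝ) : ℝ :=
  dR a t R φ Z * dZ b t R φ Z - dZ a t R φ Z * dR b t R φ Z

/-- Grad–Shafranov operator `Δ* f = R ∂_R((1/R) ∂_R f) + ∂_ZZ f`. -/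
def GS (f : F4) (t R φ Z : ℝ) : ℝ :=
  R * dR (fun s r a z => (1 / r) * dR f s r a z) t R φ Z + dZ (dZ f) t R φ Z

/-- Poloidal Laplacian `Δ_pol f = (1/R) ∂_R(R ∂_R f) + ∂_ZZ f`. -/
def LapPol (f : F4) (t R φ Z : ℝ) : ℝ :=
  (1 / R) * dR (fun s r a z => r * dR f s r a z) t R φ Z + dZ (dZ f) t R φ Z

/-- Cylindrical divergence `∇·F = (1/R)∂_R(R F_R) + (1/R)∂_φ F_φ + ∂_Z F_Z`. -/
def divC (FR Fφ FZ : F4) (t R φ Z : ℝ) : ℝ :=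
  (1 / R) * dR (fun s r a z => r * FR s r a z) t R φ Z + (1 / R) * dP Fφ t R φ Z
    + dZ FZ t R φ Z

/-- Scalar advection `X·∇f = X_R ∂_R f + (X_φ/R) ∂_φ f + X_Z ∂_Z f`. -/
def advS (XvR XvP XvZ f : F4) (t R φ Z : ℝ) : ℝ :=
  XvR t R φ Z * dR f t R φ Z + XvP t R φ Z / R * dP f t R φ Z + XvZ t R φ Z * dZ f t R φ Z

/-- `e_R`-component of `B = (1/R)∇ψ×e_φ + (F0/R)e_φ`. -/
def BR (ψ : F4) : F4 := fun t R φ Z => (1 / R) * dZ ψ t R φ Z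

/-- `e_φ`-component of the magnetic field. -/
def BP (F0 : ℝ) : F4 := fun _ R _ _ => F0 / R

/-- `e_Z`-component of the magnetic field. -/
def BZ (ψ : F4) : F4 := fun t R φ Z => -(1 / R) * dR ψ t R φ Z

/-- `e_R`-component of `v_pol = −R∇u×e_φ`. -/
def vR (u : F4) : F4 := fun t R φ Z => -R * dZ u t R φ Z

/-- `e_Z`-component of `v_pol = −R∇u×e_φ`. -/
def vZ (u : F4) : F4 := fun t R φ Z => R * dR u t R φ Z

/-- The zero field. -/
def zeroF : F4 := fun _ _ _ _ => 0

/-- `∇_pol a · ∇_pol b`. -/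
def gdot (a b : F4) : F4 := fun t R φ Z =>
  dR a t R φ Z * dR b t R φ Z + dZ a t R φ Z * dZ b t R φ Z

/-- `|B|² = (F0² + (∂_Rψ)² + (∂_Zψ)²)/R²`. -/
def B2 (F0 : ℝ) (ψ : F4) : F4 := fun t R φ Z =>
  (F0 ^ 2 + (dR ψ t R φ Z) ^ 2 + (dZ ψ t R φ Z) ^ 2) / R ^ 2

/-- `|B_pol|² = ((∂_Rψ)² + (∂_Zψ)²)/R²`. -/
def Bpol2 (ψ : F4) : F4 := fun t R φ Z =>
  ((dR ψ t R φ Z) ^ 2 + (dZ ψ t R φ Z) ^ 2) / R ^ 2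

/-- `ρ̂ = R²ρ`. -/
def rh (ρ : F4) : F4 := fun t R φ Z => R ^ 2 * ρ t R φ Z

/-- `|∇_pol u|²`. -/
def gradu2 (u : F4) : F4 := fun t R φ Z => (dR u t R φ Z) ^ 2 + (dZ u t R φ Z) ^ 2

/-- `e_R`-component of `v_pol × B`. -/
def ER (F0 : ℝ) (ψ u : F4) : F4 := fun t R φ Z =>
  vZ u t R φ Z * BP F0 t R φ Z - zeroF t R φ Z * BZ ψ t R φ Z

/-- `e_φ`-component of `v_pol × B`. -/
def EP (ψ u : F4) : F4 := fun t R φ Z =>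
  vR u t R φ Z * BZ ψ t R φ Z - vZ u t R φ Z * BR ψ t R φ Z

/-- `e_Z`-component of `v_pol × B`. -/
def EZc (F0 : ℝ) (ψ u : F4) : F4 := fun t R φ Z =>
  zeroF t R φ Z * BR ψ t R φ Z - vR u t R φ Z * BP F0 t R φ Z

/-! For `R > 0` the toroidal component of `E = v × B` is `E_φ = [ψ, u]`, so the reduced flux
equation reads `R E_φ = ∂_t ψ + F0 ∂_φ u`, while `E_R = F0 ∂_R u` and `E_Z = F0 ∂_Z u`.
Substituting these into `∇ × E`, each component becomes the time derivative of the corresponding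
component of `B` up to exchanging mixed partial derivatives, which commute because `ψ` and `u`
are smooth (symmetry of the second Fréchet derivative). -/

def uncurry4 (f : F4) (q : ℝ × ℝ × ℝ × ℝ) : ℝ := f q.1 q.2.1 q.2.2.1 q.2.2.2

def dirDeriv (f : F4) (v : ℝ × ℝ × ℝ × ℝ) : F4 :=
  fun t R φ Z => fderiv ℝ (uncurry4 f) (t, R, φ, Z) v

namespace Smooth4

variable {f g : F4}

lemma differentiable (hf : Smooth4 f) : Differentiable ℝ (uncurry4 f) :=
  ContDiff.differentiable hf (by simp)

lemma smooth_dirDeriv (hf : Smooth4 f) (v : ℝ × ℝ × ℝ × ℝ) : Smooth4 (dirDeriv f v) :=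
  (ContinuousLinearMap.apply ℝ ℝ v).contDiff.comp (hf.fderiv_right (by simp))

lemma dirDeriv_comm (hf : Smooth4 f) (v w : ℝ × ℝ × ℝ × ℝ) :
    dirDeriv (dirDeriv f v) w = dirDeriv (dirDeriv f w) v := by
  funext t R φ Z
  have hd : DifferentiableAt ℝ (fderiv ℝ (uncurry4 f)) (t, R, φ, Z) :=
    ((hf.fderiv_right (m := (⊤ : ℕ∞)) (by simp)).differentiable (by simp)).differentiableAt
  have hsecond (v w : ℝ × ℝ × ℝ × ℝ) :
      dirDeriv (dirDeriv f v) w t R φ Z = fderiv ℝ (fderiv ℝ (uncurry4 f)) (t, R, φ, Z) w v := by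
    show fderiv ℝ (fun q => fderiv ℝ (uncurry4 f) q v) (t, R, φ, Z) w = _
    rw [fderiv_clm_apply hd (differentiableAt_const v)]
    simp
  rw [hsecond, hsecond]
  exact hf.contDiffAt.isSymmSndFDerivAt
    (by simp [minSmoothness_of_isRCLikeNormedField]; norm_cast) w v

lemma dT_eq_dirDeriv (hf : Smooth4 f) : dT f = dirDeriv f (1, 0, 0, 0) := by
  funext t R φ Z
  exact ((hf.differentiable _).hasFDerivAt.comp_hasDerivAt t ((hasDerivAt_id t).prodMk
    ((hasDerivAt_const t R).prodMk ((hasDerivAt_const t φ).prodMk (hasDerivAt_const t Z))))).deriv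

lemma dR_eq_dirDeriv (hf : Smooth4 f) : dR f = dirDeriv f (0, 1, 0, 0) := by
  funext t R φ Z
  exact ((hf.differentiable _).hasFDerivAt.comp_hasDerivAt R ((hasDerivAt_const R t).prodMk
    ((hasDerivAt_id R).prodMk ((hasDerivAt_const R φ).prodMk (hasDerivAt_const R Z))))).deriv

lemma dP_eq_dirDeriv (hf : Smooth4 f) : dP f = dirDeriv f (0, 0, 1, 0) := by
  funext t R φ Z
  exact ((hf.differentiable _).hasFDerivAt.comp_hasDerivAt φ ((hasDerivAt_const φ t).prodMk
    ((hasDerivAt_const φ R).prodMk ((hasDerivAt_id φ).prodMk (hasDerivAt_const φ Z))))).deriv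

lemma dZ_eq_dirDeriv (hf : Smooth4 f) : dZ f = dirDeriv f (0, 0, 0, 1) := by
  funext t R φ Z
  exact ((hf.differentiable _).hasFDerivAt.comp_hasDerivAt Z ((hasDerivAt_const Z t).prodMk
    ((hasDerivAt_const Z R).prodMk ((hasDerivAt_const Z φ).prodMk (hasDerivAt_id Z))))).deriv

lemma smooth_dT (hf : Smooth4 f) : Smooth4 (dT f) := hf.dT_eq_dirDeriv ▸ hf.smooth_dirDeriv _
lemma smooth_dR (hf : Smooth4 f) : Smooth4 (dR f) := hf.dR_eq_dirDeriv ▸ hf.smooth_dirDeriv _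
lemma smooth_dP (hf : Smooth4 f) : Smooth4 (dP f) := hf.dP_eq_dirDeriv ▸ hf.smooth_dirDeriv _
lemma smooth_dZ (hf : Smooth4 f) : Smooth4 (dZ f) := hf.dZ_eq_dirDeriv ▸ hf.smooth_dirDeriv _

lemma dT_dR_comm (hf : Smooth4 f) : dT (dR f) = dR (dT f) := by
  rw [hf.dR_eq_dirDeriv, hf.dT_eq_dirDeriv, (hf.smooth_dirDeriv _).dT_eq_dirDeriv,
    (hf.smooth_dirDeriv _).dR_eq_dirDeriv, hf.dirDeriv_comm]

lemma dT_dZ_comm (hf : Smooth4 f) : dT (dZ f) = dZ (dT f) := by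
  rw [hf.dZ_eq_dirDeriv, hf.dT_eq_dirDeriv, (hf.smooth_dirDeriv _).dT_eq_dirDeriv,
    (hf.smooth_dirDeriv _).dZ_eq_dirDeriv, hf.dirDeriv_comm]

lemma dR_dP_comm (hf : Smooth4 f) : dR (dP f) = dP (dR f) := by
  rw [hf.dP_eq_dirDeriv, hf.dR_eq_dirDeriv, (hf.smooth_dirDeriv _).dR_eq_dirDeriv,
    (hf.smooth_dirDeriv _).dP_eq_dirDeriv, hf.dirDeriv_comm]

lemma dR_dZ_comm (hf : Smooth4 f) : dR (dZ f) = dZ (dR f) := by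
  rw [hf.dZ_eq_dirDeriv, hf.dR_eq_dirDeriv, (hf.smooth_dirDeriv _).dR_eq_dirDeriv,
    (hf.smooth_dirDeriv _).dZ_eq_dirDeriv, hf.dirDeriv_comm]

lemma dZ_dP_comm (hf : Smooth4 f) : dZ (dP f) = dP (dZ f) := by
  rw [hf.dP_eq_dirDeriv, hf.dZ_eq_dirDeriv, (hf.smooth_dirDeriv _).dZ_eq_dirDeriv,
    (hf.smooth_dirDeriv _).dP_eq_dirDeriv, hf.dirDeriv_comm]

lemma differentiableAt_R (hf : Smooth4 f) (t R φ Z : ℝ) :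
    DifferentiableAt ℝ (fun r => f t r φ Z) R :=
  (hf.differentiable _).comp R
    (by fun_prop : DifferentiableAt ℝ (fun r : ℝ => ((t, r, φ, Z) : ℝ × ℝ × ℝ × ℝ)) R)

lemma differentiableAt_Z (hf : Smooth4 f) (t R φ Z : ℝ) :
    DifferentiableAt ℝ (fun z => f t R φ z) Z :=
  (hf.differentiable _).comp Z
    (by fun_prop : DifferentiableAt ℝ (fun z : ℝ => ((t, R, φ, z) : ℝ × ℝ × ℝ × ℝ)) Z)

end Smooth4

lemma dR_add_const_mul {f g : F4} (hf : Smooth4 f) (hg : Smooth4 g) (c t R φ Z : ℝ) :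
    dR (fun t R φ Z => f t R φ Z + c * g t R φ Z) t R φ Z
      = dR f t R φ Z + c * dR g t R φ Z :=
  deriv_fun_add (hf.differentiableAt_R t R φ Z) ((hg.differentiableAt_R t R φ Z).const_mul c)
    |>.trans (congrArg _ (deriv_const_mul _ (hg.differentiableAt_R t R φ Z)))

lemma dZ_add_const_mul {f g : F4} (hf : Smooth4 f) (hg : Smooth4 g) (c t R φ Z : ℝ) :
    dZ (fun t R φ Z => f t R φ Z + c * g t R φ Z) t R φ Z
      = dZ f t R φ Z + c * dZ g t R φ Z :=
  deriv_fun_add (hf.differentiableAt_Z t R φ Z) ((hg.differentiableAt_Z t R φ Z).const_mul c)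
    |>.trans (congrArg _ (deriv_const_mul _ (hg.differentiableAt_Z t R φ Z)))

section CongruenceOnHalfSpace

variable {f g : F4} (hfg : ∀ t R φ Z, 0 < R → f t R φ Z = g t R φ Z) {t R φ Z : ℝ}
include hfg

lemma dR_congr_of_pos (hR : 0 < R) : dR f t R φ Z = dR g t R φ Z :=
  Filter.EventuallyEq.deriv_eq <| by
    filter_upwards [eventually_gt_nhds hR] with r hr using hfg t r φ Z hr

lemma dP_congr_of_pos (hR : 0 < R) : dP f t R φ Z = dP g t R φ Z :=
  congrArg (deriv · φ) (funext fun a => hfg t R a Z hR)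

lemma dZ_congr_of_pos (hR : 0 < R) : dZ f t R φ Z = dZ g t R φ Z :=
  congrArg (deriv · Z) (funext fun z => hfg t R φ z hR)

end CongruenceOnHalfSpace

lemma dR_const_mul (c : ℝ) (g : F4) (t R φ Z : ℝ) :
    dR (fun t R φ Z => c * g t R φ Z) t R φ Z = c * dR g t R φ Z :=
  congrFun (deriv_const_mul_field' c) R

lemma dT_mul_left_of_R (c : ℝ → ℝ) (g : F4) (t R φ Z : ℝ) :
    dT (fun t R φ Z => c R * g t R φ Z) t R φ Z = c R * dT g t R φ Z :=
  congrFun (deriv_const_mul_field' (c R)) t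

lemma dP_mul_left_of_R (c : ℝ → ℝ) (g : F4) (t R φ Z : ℝ) :
    dP (fun t R φ Z => c R * g t R φ Z) t R φ Z = c R * dP g t R φ Z :=
  congrFun (deriv_const_mul_field' (c R)) φ

lemma dZ_mul_left_of_R (c : ℝ → ℝ) (g : F4) (t R φ Z : ℝ) :
    dZ (fun t R φ Z => c R * g t R φ Z) t R φ Z = c R * dZ g t R φ Z :=
  congrFun (deriv_const_mul_field' (c R)) Z

section ElectricField

variable {F0 : ℝ} {ψ u : F4} {t R φ Z : ℝ}

lemma EP_eq_pb (hR : R ≠ 0) : EP ψ u t R φ Z = pb ψ u t R φ Z := by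
  simp only [EP, vR, BZ, vZ, BR, pb]
  field_simp

lemma ER_eq (hR : R ≠ 0) : ER F0 ψ u t R φ Z = F0 * dR u t R φ Z := by
  simp only [ER, vZ, BP, zeroF, zero_mul, sub_zero]
  field_simp

lemma EZc_eq (hR : R ≠ 0) : EZc F0 ψ u t R φ Z = F0 * dZ u t R φ Z := by
  simp only [EZc, vR, BP, zeroF, zero_mul, zero_sub]
  field_simp

lemma mul_EP_of_flux
    (hflux : ∀ t R φ Z : ℝ, 0 < R → dT ψ t R φ Z = R * pb ψ u t R φ Z - F0 * dP u t R φ Z)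
    (hR : 0 < R) : R * EP ψ u t R φ Z = dT ψ t R φ Z + F0 * dP u t R φ Z := by
  rw [EP_eq_pb hR.ne', hflux t R φ Z hR]
  ring

lemma EP_eq_of_flux
    (hflux : ∀ t R φ Z : ℝ, 0 < R → dT ψ t R φ Z = R * pb ψ u t R φ Z - F0 * dP u t R φ Z)
    (hR : 0 < R) : EP ψ u t R φ Z = 1 / R * (dT ψ t R φ Z + F0 * dP u t R φ Z) := by
  rw [← mul_EP_of_flux hflux hR]
  field_simp

end ElectricField

/-- if `∂_tψ = R[ψ,u] − F0 ∂_φ u` then the ideal induction equation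
`∂_t B = ∇×(v_pol × B)` holds componentwise (in the left-handed cylindrical frame). -/
theorem ideal_induction_equation (F0 : ℝ) (ψ u : F4) (hψ : Smooth4 ψ) (hu : Smooth4 u)
    (hflux : ∀ t R φ Z : ℝ, 0 < R →
      dT ψ t R φ Z = R * pb ψ u t R φ Z - F0 * dP u t R φ Z) :
    ∀ t R φ Z : ℝ, 0 < R →
      (dT (BR ψ) t R φ Z
          = dZ (EP ψ u) t R φ Z - (1 / R) * dP (EZc F0 ψ u) t R φ Z) ∧
      (dT (BP F0) t R φ Z
          = dR (EZc F0 ψ u) t R φ Z - dZ (ER F0 ψ u) t R φ Z) ∧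
      (dT (BZ ψ) t R φ Z
          = (1 / R) * dP (ER F0 ψ u) t R φ Z
            - (1 / R) * dR (fun s r a z => r * EP ψ u s r a z) t R φ Z) := by
  intro t R φ Z hR
  have hrEP : ∀ t R φ Z, 0 < R → R * EP ψ u t R φ Z = dT ψ t R φ Z + F0 * dP u t R φ Z :=
    fun _ _ _ _ hR => mul_EP_of_flux hflux hR
  have hEP : ∀ t R φ Z, 0 < R → EP ψ u t R φ Z = 1 / R * (dT ψ t R φ Z + F0 * dP u t R φ Z) :=
    fun _ _ _ _ hR => EP_eq_of_flux hflux hR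
  have hER : ∀ t R φ Z, 0 < R → ER F0 ψ u t R φ Z = F0 * dR u t R φ Z :=
    fun _ _ _ _ hR => ER_eq hR.ne'
  have hEZ : ∀ t R φ Z, 0 < R → EZc F0 ψ u t R φ Z = F0 * dZ u t R φ Z :=
    fun _ _ _ _ hR => EZc_eq hR.ne'
  refine ⟨?_, ?_, ?_⟩
  · rw [show dT (BR ψ) t R φ Z = 1 / R * dT (dZ ψ) t R φ Z from
        dT_mul_left_of_R (fun R => 1 / R) _ _ _ _ _,
      dZ_congr_of_pos hEP hR, dZ_mul_left_of_R (fun R => 1 / R),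
      dZ_add_const_mul hψ.smooth_dT hu.smooth_dP, dP_congr_of_pos hEZ hR,
      dP_mul_left_of_R (fun _ => F0), hψ.dT_dZ_comm, hu.dZ_dP_comm]
    ring
  · rw [show dT (BP F0) t R φ Z = 0 from deriv_const t _, dR_congr_of_pos hEZ hR,
      dZ_congr_of_pos hER hR, dZ_mul_left_of_R (fun _ => F0), dR_const_mul, hu.dR_dZ_comm]
    ring
  · rw [show dT (BZ ψ) t R φ Z = -(1 / R) * dT (dR ψ) t R φ Z from
        dT_mul_left_of_R (fun R => -(1 / R)) _ _ _ _ _,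
      dP_congr_of_pos hER hR, dP_mul_left_of_R (fun _ => F0), dR_congr_of_pos hrEP hR,
      dR_add_const_mul hψ.smooth_dT hu.smooth_dP, hψ.dT_dR_comm, hu.dR_dP_comm]
    ring
end
end

section
/- Let F0∈ℝ and let ψ,v∥,ρ be smooth functions of (t,R,φ,Z) on ℝ×{R>0}×ℝ×ℝ, and set B := ((1/R)∂_Zψ)e_R+(F0/R)e_φ+(−(1/R)∂_Rψ)e_Z. Then at every point, e_φ·∇×(R²ρ ∂_t(v∥B)) = −R ∇·(ρ ∂_t(v∥∇_polψ)), where ∂_t(v∥B) is the componentwise time derivative of the vector field v∥B (F0 being constant), and v∥∇_polψ is the vector field (v∥∂_Rψ)e_R+(v∥∂_Zψ)e_Z with zero φ-component. -/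
noncomputable section
set_option linter.unusedVariables false

open Real

/-!
Since `1/R` does not depend on `t`, it passes through `∂_t`, so
`R² ρ ∂_t(v∥ B_Z) = -R ρ ∂_t(v∥ ∂_R ψ)` and `R² ρ ∂_t(v∥ B_R) = R ρ ∂_t(v∥ ∂_Z ψ)`.
With `G := ρ ∂_t(v∥ ∇_pol ψ)` the left-hand side is therefore
`-∂_R(R G_R) - ∂_Z(R G_Z) = -R ((1/R) ∂_R(R G_R) + ∂_Z G_Z) = -R ∇·G`.
-/

theorem dT_mul_of_time_indep (c : ℝ → ℝ → ℝ → ℝ) (f : F4) (t R φ Z : ℝ) :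
    dT (fun s r a z => c r a z * f s r a z) t R φ Z = c R φ Z * dT f t R φ Z :=
  deriv_const_mul_field _

theorem dT_mul_BZ (v ψ : F4) (t R φ Z : ℝ) :
    dT (fun s r a z => v s r a z * BZ ψ s r a z) t R φ Z
      = -(1 / R) * dT (fun s r a z => v s r a z * dR ψ s r a z) t R φ Z := by
  rw [← dT_mul_of_time_indep (fun r _ _ => -(1 / r))]
  simp only [BZ, mul_left_comm]

theorem dT_mul_BR (v ψ : F4) (t R φ Z : ℝ) :
    dT (fun s r a z => v s r a z * BR ψ s r a z) t R φ Z
      = 1 / R * dT (fun s r a z => v s r a z * dZ ψ s r a z) t R φ Z := by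
  rw [← dT_mul_of_time_indep (fun r _ _ => 1 / r)]
  simp only [BR, mul_left_comm]

theorem sq_mul_one_div {G₀ : Type*} [GroupWithZero G₀] (a : G₀) : a ^ 2 * (1 / a) = a := by
  rcases eq_or_ne a 0 with rfl | ha
  · simp
  · rw [one_div, sq, mul_inv_cancel_right₀ ha]

theorem sq_mul_dT_mul_BZ (ρ v ψ : F4) :
    (fun s r a z => r ^ 2 * ρ s r a z
        * dT (fun s' r' a' z' => v s' r' a' z' * BZ ψ s' r' a' z') s r a z)
      = fun s r a z => -(r * (ρ s r a z
        * dT (fun s' r' a' z' => v s' r' a' z' * dR ψ s' r' a' z') s r a z)) := by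
  funext s r a z
  rw [dT_mul_BZ]
  linear_combination -(ρ s r a z * dT _ s r a z) * sq_mul_one_div r

theorem sq_mul_dT_mul_BR (ρ v ψ : F4) :
    (fun s r a z => r ^ 2 * ρ s r a z
        * dT (fun s' r' a' z' => v s' r' a' z' * BR ψ s' r' a' z') s r a z)
      = fun s r a z => r * (ρ s r a z
        * dT (fun s' r' a' z' => v s' r' a' z' * dZ ψ s' r' a' z') s r a z) := by
  funext s r a z
  rw [dT_mul_BR]
  linear_combination ρ s r a z * dT _ s r a z * sq_mul_one_div r

theorem dR_neg_mul_sub_dZ_mul_eq_neg_mul_divC (GR GZ : F4) {R : ℝ} (hR : R ≠ 0) (t φ Z : ℝ) :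
    dR (fun s r a z => -(r * GR s r a z)) t R φ Z - dZ (fun s r a z => r * GZ s r a z) t R φ Z
      = -R * divC GR zeroF GZ t R φ Z := by
  have h_neg : dR (fun s r a z => -(r * GR s r a z)) t R φ Z
      = -dR (fun s r a z => r * GR s r a z) t R φ Z := deriv.fun_neg
  have h_mul : dZ (fun s r a z => r * GZ s r a z) t R φ Z = R * dZ GZ t R φ Z :=
    deriv_const_mul_field _
  have h_zero : dP zeroF t R φ Z = 0 := deriv_const _ _
  rw [h_neg, h_mul, divC, h_zero]
  field_simp
  ring

theorem curl_phi_of_parallel_inertia_general (ψ vpar ρ : F4) :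
    ∀ t R φ Z : ℝ, 0 < R →
      dR (fun s r a z => r ^ 2 * ρ s r a z
            * dT (fun s' r' a' z' => vpar s' r' a' z' * BZ ψ s' r' a' z') s r a z) t R φ Z
        - dZ (fun s r a z => r ^ 2 * ρ s r a z
            * dT (fun s' r' a' z' => vpar s' r' a' z' * BR ψ s' r' a' z') s r a z) t R φ Z
      = -R * divC
          (fun s r a z => ρ s r a z
            * dT (fun s' r' a' z' => vpar s' r' a' z' * dR ψ s' r' a' z') s r a z)
          zeroF
          (fun s r a z => ρ s r a z
            * dT (fun s' r' a' z' => vpar s' r' a' z' * dZ ψ s' r' a' z') s r a z)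
          t R φ Z := by
  intro t R φ Z hR
  rw [sq_mul_dT_mul_BZ, sq_mul_dT_mul_BR]
  exact dR_neg_mul_sub_dZ_mul_eq_neg_mul_divC _ _ hR.ne' t φ Z

/-- `e_φ·∇×(R²ρ ∂_t(v∥B)) = −R ∇·(ρ ∂_t(v∥ ∇_pol ψ))`. -/
theorem curl_phi_of_parallel_inertia (F0 : ℝ) (ψ vpar ρ : F4)
    (hψ : Smooth4 ψ) (hv : Smooth4 vpar) (hρ : Smooth4 ρ) :
    ∀ t R φ Z : ℝ, 0 < R →
      dR (fun s r a z => r ^ 2 * ρ s r a z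
            * dT (fun s' r' a' z' => vpar s' r' a' z' * BZ ψ s' r' a' z') s r a z) t R φ Z
        - dZ (fun s r a z => r ^ 2 * ρ s r a z
            * dT (fun s' r' a' z' => vpar s' r' a' z' * BR ψ s' r' a' z') s r a z) t R φ Z
      = -R * divC
          (fun s r a z => ρ s r a z
            * dT (fun s' r' a' z' => vpar s' r' a' z' * dR ψ s' r' a' z') s r a z)
          zeroF
          (fun s r a z => ρ s r a z
            * dT (fun s' r' a' z' => vpar s' r' a' z' * dZ ψ s' r' a' z') s r a z)
          t R φ Z :=
  curl_phi_of_parallel_inertia_general ψ vpar ρ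
end
end

section
/- Let F0∈ℝ and let ψ,u be smooth functions of (t,R,φ,Z) on ℝ×{R>0}×ℝ×ℝ, 2π-periodic in φ, with ψ(t,·) and u(t,·) supported (in the (R,Z)-variables) in a fixed compact subset K of the half-plane {R>0} for all t, satisfying the ideal reduced flux equation ∂_tψ = R[ψ,u] − F0∂_φu. Then the magnetic helicity t ↦ ∫_0^{2π}∫_K (ψ/R²) R dR dZ dφ is constant in time. -/
noncomputable section
set_option linter.unusedVariables false

open Real

open MeasureTheory

/-!
Differentiating under the integral sign, the time derivative of the helicity is
`∫∫ ∂ₜψ / R`, which by the flux equation equals `∫∫ [ψ, u] - F0 ∫∫ ∂_φ u / R`. The Poisson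
bracket integrates to zero over each poloidal plane, since integrating by parts moves both
derivatives onto `u`, where they commute; the last term vanishes after integrating in `φ` first,
by periodicity of `u`.
-/

open Set Filter Topology
open scoped ContDiff

theorem hasDerivAt_setIntegral_of_continuousOn {X E : Type*} [TopologicalSpace X] [T2Space X]
    [MeasurableSpace X] [OpensMeasurableSpace X] [NormedAddCommGroup E] [NormedSpace ℝ E]
    [SecondCountableTopologyEither X E] {μ : Measure X} [IsFiniteMeasureOnCompacts μ]
    {S : Set X} (hS : IsCompact S) {F F' : ℝ → X → E}
    (hF : ∀ t, ∀ x ∈ S, HasDerivAt (F · x) (F' t x) t) (hFc : ∀ t, ContinuousOn (F t) S)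
    (hF'c : ContinuousOn (Function.uncurry F') (univ ×ˢ S)) (t₀ : ℝ) :
    HasDerivAt (fun t => ∫ x in S, F t x ∂μ) (∫ x in S, F' t₀ x ∂μ) t₀ := by
  have hSm := hS.measurableSet
  have : IsFiniteMeasure (μ.restrict S) := isFiniteMeasure_restrict.mpr hS.measure_ne_top
  obtain ⟨C, hC⟩ := ((isCompact_closedBall t₀ 1).prod hS).exists_bound_of_continuousOn
    (hF'c.mono (prod_mono (subset_univ _) subset_rfl))
  have hF'c₀ : ContinuousOn (F' t₀) S :=
    hF'c.comp (continuousOn_const.prodMk continuousOn_id) fun x hx => ⟨mem_univ _, hx⟩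
  refine (hasDerivAt_integral_of_dominated_loc_of_deriv_le (bound := fun _ => C)
    (Metric.ball_mem_nhds t₀ one_pos)
    (Eventually.of_forall fun t => (hFc t).aestronglyMeasurable hSm)
    ((hFc t₀).integrableOn_compact hS) (hF'c₀.aestronglyMeasurable hSm) ?_
    (integrable_const C) ?_).2
  · filter_upwards [ae_restrict_mem hSm] with x hx t ht
    exact hC (t, x) ⟨Metric.ball_subset_closedBall ht, hx⟩
  · filter_upwards [ae_restrict_mem hSm] with x hx t _ using hF t x hx

theorem intervalIntegral_setIntegral_eq_setIntegral_prod {Y E : Type*} [MeasurableSpace Y]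
    [NormedAddCommGroup E] [NormedSpace ℝ E] {ν : Measure Y} [SFinite ν] {a b : ℝ} (hab : a ≤ b)
    {K : Set Y} {g : ℝ × Y → E} (hg : IntegrableOn g (Icc a b ×ˢ K) (volume.prod ν)) :
    ∫ x in a..b, ∫ y in K, g (x, y) ∂ν = ∫ p in Icc a b ×ˢ K, g p ∂(volume.prod ν) := by
  rw [intervalIntegral.integral_of_le hab, ← integral_Icc_eq_integral_Ioc, setIntegral_prod _ hg]

theorem Function.Periodic.intervalIntegral_deriv_eq_zero {E : Type*} [NormedAddCommGroup E]
    [NormedSpace ℝ E] [CompleteSpace E] {f f' : ℝ → E} {T : ℝ} (hf : Function.Periodic f T)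
    (hderiv : ∀ x, HasDerivAt f (f' x) x) (hf' : Continuous f') (a : ℝ) :
    ∫ x in a..a + T, f' x = 0 := by
  rw [intervalIntegral.integral_eq_sub_of_hasDerivAt (fun x _ => hderiv x)
    (hf'.intervalIntegrable _ _), hf a, sub_self]

theorem fderiv_fderiv_apply_comm {E : Type*} [NormedAddCommGroup E] [NormedSpace ℝ E]
    {b : E → ℝ} (hb : ContDiff ℝ 2 b) (x v w : E) :
    fderiv ℝ (fun y => fderiv ℝ b y w) x v = fderiv ℝ (fun y => fderiv ℝ b y v) x w := by
  have hdb : DifferentiableAt ℝ (fderiv ℝ b) x :=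
    (hb.fderiv_right (m := 1) le_rfl).differentiable one_ne_zero x
  have hsecond : ∀ v w, fderiv ℝ (fun y => fderiv ℝ b y w) x v = fderiv ℝ (fderiv ℝ b) x v w :=
    fun v w => by rw [fderiv_clm_apply hdb (differentiableAt_const w)]; simp
  rw [hsecond, hsecond, hb.contDiffAt.isSymmSndFDerivAt (by simp) v w]

section IntegrationByParts

variable {E : Type*} [NormedAddCommGroup E] [NormedSpace ℝ E] [FiniteDimensional ℝ E]
  [MeasurableSpace E] [BorelSpace E] {μ : Measure E} [μ.IsAddHaarMeasure]

theorem integral_fderiv_mul_eq_neg_integral_mul_fderiv {a c : E → ℝ} (ha : ContDiff ℝ 1 a)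
    (ha' : HasCompactSupport a) (hc : ContDiff ℝ 1 c) (v : E) :
    ∫ x, fderiv ℝ a x v * c x ∂μ = -∫ x, a x * fderiv ℝ c x v ∂μ := by
  have hint : ∀ {g h : E → ℝ}, Continuous g → HasCompactSupport g → Continuous h →
      Integrable (fun x => g x * h x) μ :=
    fun hg hg' hh => (hg.mul hh).integrable_of_hasCompactSupport hg'.mul_right
  rw [integral_mul_fderiv_eq_neg_fderiv_mul_of_integrable
    (hint ((ha.continuous_fderiv one_ne_zero).clm_apply continuous_const) (ha'.fderiv_apply ℝ v)
      hc.continuous)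
    (hint ha.continuous ha' ((hc.continuous_fderiv one_ne_zero).clm_apply continuous_const))
    (hint ha.continuous ha' hc.continuous) (fun x _ => ha.differentiable one_ne_zero x)
    (fun x _ => hc.differentiable one_ne_zero x), neg_neg]

theorem integral_fderiv_bracket_eq_zero {a b : E → ℝ} (ha : ContDiff ℝ 1 a)
    (ha' : HasCompactSupport a) (hb : ContDiff ℝ 2 b) (v w : E) :
    ∫ x, (fderiv ℝ a x v * fderiv ℝ b x w - fderiv ℝ a x w * fderiv ℝ b x v) ∂μ = 0 := by
  have hdb : ∀ u, ContDiff ℝ 1 fun x => fderiv ℝ b x u :=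
    fun u => (hb.fderiv_right (m := 1) le_rfl).clm_apply contDiff_const
  have hint : ∀ u u', Integrable (fun x => fderiv ℝ a x u * fderiv ℝ b x u') μ := fun u u' =>
    (((ha.continuous_fderiv one_ne_zero).clm_apply continuous_const).mul
      (hdb u').continuous).integrable_of_hasCompactSupport (ha'.fderiv_apply ℝ u).mul_right
  rw [integral_sub (hint v w) (hint w v),
    integral_fderiv_mul_eq_neg_integral_mul_fderiv ha ha' (hdb w),
    integral_fderiv_mul_eq_neg_integral_mul_fderiv ha ha' (hdb v)]
  simp_rw [fderiv_fderiv_apply_comm hb _ v w, sub_self]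

end IntegrationByParts

section Smooth4

variable {f : F4}

theorem Smooth4.comp {E : Type*} [NormedAddCommGroup E] [NormedSpace ℝ E] (hf : Smooth4 f)
    {a b c d : E → ℝ} (ha : ContDiff ℝ ∞ a) (hb : ContDiff ℝ ∞ b) (hc : ContDiff ℝ ∞ c)
    (hd : ContDiff ℝ ∞ d) : ContDiff ℝ ∞ fun x => f (a x) (b x) (c x) (d x) :=
  ContDiff.comp hf (ha.prodMk (hb.prodMk (hc.prodMk hd)))

theorem Smooth4.continuous_comp {X : Type*} [TopologicalSpace X] (hf : Smooth4 f)
    {a b c d : X → ℝ} (ha : Continuous a) (hb : Continuous b) (hc : Continuous c)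
    (hd : Continuous d) : Continuous fun x => f (a x) (b x) (c x) (d x) :=
  hf.continuous.comp (ha.prodMk (hb.prodMk (hc.prodMk hd)))

theorem Smooth4.hasDerivAt_dT (hf : Smooth4 f) (t R φ Z : ℝ) :
    HasDerivAt (fun s => f s R φ Z) (dT f t R φ Z) t :=
  ((hf.comp contDiff_id contDiff_const contDiff_const contDiff_const).differentiable
    (by simp) t).hasDerivAt

theorem Smooth4.hasDerivAt_dP (hf : Smooth4 f) (t R φ Z : ℝ) :
    HasDerivAt (fun a => f t R a Z) (dP f t R φ Z) φ :=
  ((hf.comp contDiff_const contDiff_const contDiff_id contDiff_const).differentiable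
    (by simp) φ).hasDerivAt

theorem smooth4_dT (hf : Smooth4 f) : Smooth4 (dT f) :=
  ContDiff.fderiv_apply (f := fun (q : ℝ × ℝ × ℝ × ℝ) (s : ℝ) => f s q.2.1 q.2.2.1 q.2.2.2)
    (hf.comp contDiff_snd (by fun_prop) (by fun_prop) (by fun_prop)) contDiff_fst contDiff_const
    (by simp)

theorem smooth4_dP (hf : Smooth4 f) : Smooth4 (dP f) :=
  ContDiff.fderiv_apply (f := fun (q : ℝ × ℝ × ℝ × ℝ) (a : ℝ) => f q.1 q.2.1 a q.2.2.2)
    (hf.comp (by fun_prop) (by fun_prop) contDiff_snd (by fun_prop)) (by fun_prop) contDiff_const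
    (by simp)

theorem Smooth4.contDiff_slice (hf : Smooth4 f) (t φ : ℝ) :
    ContDiff ℝ ∞ fun q : ℝ × ℝ => f t q.1 φ q.2 :=
  hf.comp contDiff_const contDiff_fst contDiff_const contDiff_snd

theorem Smooth4.dR_eq_fderiv (hf : Smooth4 f) (t R φ Z : ℝ) :
    dR f t R φ Z = fderiv ℝ (fun q : ℝ × ℝ => f t q.1 φ q.2) (R, Z) (1, 0) := by
  have h := (((hf.contDiff_slice t φ).differentiable (by simp) (R, Z)).hasFDerivAt.comp_hasDerivAt
    R ((hasDerivAt_id' R).prodMk (hasDerivAt_const R Z))).deriv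
  exact h

theorem Smooth4.dZ_eq_fderiv (hf : Smooth4 f) (t R φ Z : ℝ) :
    dZ f t R φ Z = fderiv ℝ (fun q : ℝ × ℝ => f t q.1 φ q.2) (R, Z) (0, 1) := by
  have h := (((hf.contDiff_slice t φ).differentiable (by simp) (R, Z)).hasFDerivAt.comp_hasDerivAt
    Z ((hasDerivAt_const Z R).prodMk (hasDerivAt_id' Z))).deriv
  exact h

end Smooth4

theorem setIntegral_pb_eq_zero {ψ u : F4} (hψ : Smooth4 ψ) (hu : Smooth4 u) {K : Set (ℝ × ℝ)}
    (hK : IsCompact K) (hψK : ∀ t R φ Z : ℝ, (R, Z) ∉ K → ψ t R φ Z = 0) (t φ : ℝ) :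
    ∫ q in K, pb ψ u t q.1 φ q.2 = 0 := by
  set a : ℝ × ℝ → ℝ := fun q => ψ t q.1 φ q.2
  set b : ℝ × ℝ → ℝ := fun q => u t q.1 φ q.2
  have hpb : ∀ q : ℝ × ℝ, pb ψ u t q.1 φ q.2 =
      fderiv ℝ a q (1, 0) * fderiv ℝ b q (0, 1) - fderiv ℝ a q (0, 1) * fderiv ℝ b q (1, 0) :=
    fun q => by
      simp only [pb, hψ.dR_eq_fderiv, hψ.dZ_eq_fderiv, hu.dR_eq_fderiv, hu.dZ_eq_fderiv]; rfl
  have haK : tsupport a ⊆ K :=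
    closure_minimal (Function.support_subset_iff'.2 fun q hq => hψK t q.1 φ q.2 hq) hK.isClosed
  rw [setIntegral_eq_integral_of_forall_compl_eq_zero fun q hq => by
    rw [hpb, fderiv_of_notMem_tsupport ℝ fun h => hq (haK h)]; simp]
  simp_rw [hpb]
  exact integral_fderiv_bracket_eq_zero ((hψ.contDiff_slice t φ).of_le ENat.LEInfty.out)
    (HasCompactSupport.intro hK fun q hq => hψK t q.1 φ q.2 hq)
    ((hu.contDiff_slice t φ).of_le ENat.LEInfty.out) _ _

theorem intervalIntegral_setIntegral_dP_div_eq_zero {u : F4} (hu : Smooth4 u)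
    (huper : ∀ t R φ Z : ℝ, u t R (φ + 2 * π) Z = u t R φ Z) {K : Set (ℝ × ℝ)}
    (hK : IsCompact K) (hKpos : ∀ q ∈ K, 0 < q.1) (t : ℝ) :
    ∫ φ in (0)..(2 * π), ∫ q in K, dP u t q.1 φ q.2 / q.1 = 0 := by
  have hcont : ContinuousOn (fun p : ℝ × ℝ × ℝ => dP u t p.2.1 p.1 p.2.2 / p.2.1)
      (Icc 0 (2 * π) ×ˢ K) :=
    ((smooth4_dP hu).continuous_comp continuous_const (by fun_prop) continuous_fst
      (by fun_prop)).continuousOn.div (by fun_prop) fun p hp => (hKpos p.2 hp.2).ne'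
  rw [intervalIntegral_integral_swap]
  · have hperiod : ∀ q : ℝ × ℝ, ∫ φ in (0)..(2 * π), dP u t q.1 φ q.2 = 0 := fun q => by
      simpa using Function.Periodic.intervalIntegral_deriv_eq_zero (fun φ => huper t q.1 φ q.2)
          (fun φ => hu.hasDerivAt_dP t q.1 φ q.2)
          ((smooth4_dP hu).continuous_comp continuous_const continuous_const continuous_id
            continuous_const) 0
    simp_rw [intervalIntegral.integral_div, hperiod, zero_div, integral_zero]
  · rw [uIoc_of_le two_pi_pos.le, Measure.prod_restrict]
    exact (hcont.integrableOn_compact (isCompact_Icc.prod hK)).mono_set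
      (prod_mono Ioc_subset_Icc_self subset_rfl)

def helicity (ψ : F4) (K : Set (ℝ × ℝ)) (t : ℝ) : ℝ :=
  ∫ φ in (0)..(2 * π), ∫ q in K, ψ t q.1 φ q.2 / q.1 ^ 2 * q.1

theorem hasDerivAt_helicity {ψ : F4} (hψ : Smooth4 ψ) {K : Set (ℝ × ℝ)} (hK : IsCompact K)
    (hKpos : ∀ q ∈ K, 0 < q.1) (t : ℝ) : HasDerivAt (helicity ψ K) (helicity (dT ψ) K t) t := by
  set S := Icc 0 (2 * π) ×ˢ K
  have hS : IsCompact S := isCompact_Icc.prod hK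
  have hcont : ∀ f : F4, Smooth4 f → ContinuousOn
      (fun x : ℝ × ℝ × ℝ × ℝ => f x.1 x.2.2.1 x.2.1 x.2.2.2 / x.2.2.1 ^ 2 * x.2.2.1) (univ ×ˢ S) :=
    fun f hf => ((hf.continuous_comp continuous_fst (by fun_prop) (by fun_prop)
      (by fun_prop)).continuousOn.div (by fun_prop) fun x hx => pow_ne_zero 2
        (hKpos _ hx.2.2).ne').mul (by fun_prop)
  have hcont_t : ∀ f : F4, Smooth4 f → ∀ t, ContinuousOn
      (fun p : ℝ × ℝ × ℝ => f t p.2.1 p.1 p.2.2 / p.2.1 ^ 2 * p.2.1) S := fun f hf t =>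
    (hcont f hf).comp (continuousOn_const.prodMk continuousOn_id) fun p hp => ⟨mem_univ t, hp⟩
  have hH : ∀ f : F4, Smooth4 f →
      helicity f K = fun t => ∫ p in S, f t p.2.1 p.1 p.2.2 / p.2.1 ^ 2 * p.2.1 :=
    fun f hf => funext fun t => intervalIntegral_setIntegral_eq_setIntegral_prod two_pi_pos.le
      ((hcont_t f hf t).integrableOn_compact hS)
  rw [hH ψ hψ, hH (dT ψ) (smooth4_dT hψ)]
  exact hasDerivAt_setIntegral_of_continuousOn hS
    (fun t p _ => ((hψ.hasDerivAt_dT t _ _ _).div_const _).mul_const _) (hcont_t ψ hψ)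
    (hcont (dT ψ) (smooth4_dT hψ)) t

theorem helicity_dT_eq_zero {F0 : ℝ} {ψ u : F4} (hψ : Smooth4 ψ) (hu : Smooth4 u)
    (huper : ∀ t R φ Z : ℝ, u t R (φ + 2 * π) Z = u t R φ Z) {K : Set (ℝ × ℝ)}
    (hK : IsCompact K) (hKpos : ∀ q ∈ K, 0 < q.1)
    (hψK : ∀ t R φ Z : ℝ, (R, Z) ∉ K → ψ t R φ Z = 0)
    (hflux : ∀ t R φ Z : ℝ, 0 < R →
      dT ψ t R φ Z = R * pb ψ u t R φ Z - F0 * dP u t R φ Z) (t : ℝ) :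
    helicity (dT ψ) K t = 0 := by
  have hslice : ∀ φ, ∫ q in K, dT ψ t q.1 φ q.2 / q.1 ^ 2 * q.1 =
      -F0 * ∫ q in K, dP u t q.1 φ q.2 / q.1 := fun φ => by
    have hint : ∀ f : F4, Smooth4 f → IntegrableOn (fun q => f t q.1 φ q.2 / q.1) K :=
      fun f hf => ((hf.continuous_comp continuous_const continuous_fst continuous_const
        continuous_snd).continuousOn.div continuous_fst.continuousOn
          fun q hq => (hKpos q hq).ne').integrableOn_compact hK
    have hdT : IntegrableOn (fun q => dT ψ t q.1 φ q.2 / q.1 ^ 2 * q.1) K :=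
      (hint _ (smooth4_dT hψ)).congr_fun (fun q hq => by
        have := (hKpos q hq).ne'
        field_simp) hK.measurableSet
    rw [← sub_eq_zero, neg_mul, sub_neg_eq_add, ← integral_const_mul,
      ← integral_add hdT ((hint _ (smooth4_dP hu)).const_mul F0)]
    refine (setIntegral_congr_fun hK.measurableSet fun q hq => ?_).trans
      (setIntegral_pb_eq_zero hψ hu hK hψK t φ)
    have hR := (hKpos q hq).ne'
    simp only [hflux t q.1 φ q.2 (hKpos q hq)]
    field_simp
    ring
  unfold helicity
  simp_rw [hslice, intervalIntegral.integral_const_mul,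
    intervalIntegral_setIntegral_dP_div_eq_zero hu huper hK hKpos t, mul_zero]

theorem magnetic_helicity_conservation_general (F0 : ℝ) (ψ u : F4)
    (hψ : Smooth4 ψ) (hu : Smooth4 u)
    (huper : ∀ t R φ Z : ℝ, u t R (φ + 2 * π) Z = u t R φ Z)
    (K : Set (ℝ × ℝ)) (hK : IsCompact K) (hKpos : ∀ q ∈ K, 0 < q.1)
    (hsupp : ∀ t R φ Z : ℝ, (R, Z) ∉ K → ψ t R φ Z = 0 ∧ u t R φ Z = 0)
    (hflux : ∀ t R φ Z : ℝ, 0 < R →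
      dT ψ t R φ Z = R * pb ψ u t R φ Z - F0 * dP u t R φ Z) :
    ∀ t₁ t₂ : ℝ,
      (∫ φ in (0:ℝ)..(2 * π), ∫ q in K, ψ t₁ q.1 φ q.2 / q.1 ^ 2 * q.1)
        = ∫ φ in (0:ℝ)..(2 * π), ∫ q in K, ψ t₂ q.1 φ q.2 / q.1 ^ 2 * q.1 := by
  have hderiv : ∀ t, HasDerivAt (helicity ψ K) 0 t := fun t => by
    simpa only [helicity_dT_eq_zero hψ hu huper hK hKpos (fun t R φ Z h => (hsupp t R φ Z h).1)
      hflux t] using hasDerivAt_helicity hψ hK hKpos t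
  exact is_const_of_deriv_eq_zero (fun t => (hderiv t).differentiableAt)
    (fun t => (hderiv t).deriv)

/-- conservation of magnetic helicity `∫ (ψ/R²) dW`, `dW = R dR dZ dφ`,
for the ideal reduced flux equation. -/
theorem magnetic_helicity_conservation (F0 : ℝ) (ψ u : F4)
    (hψ : Smooth4 ψ) (hu : Smooth4 u)
    (hψper : ∀ t R φ Z : ℝ, ψ t R (φ + 2 * π) Z = ψ t R φ Z)
    (huper : ∀ t R φ Z : ℝ, u t R (φ + 2 * π) Z = u t R φ Z)
    (K : Set (ℝ × ℝ)) (hK : IsCompact K) (hKpos : ∀ q ∈ K, 0 < q.1)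
    (hsupp : ∀ t R φ Z : ℝ, (R, Z) ∉ K → ψ t R φ Z = 0 ∧ u t R φ Z = 0)
    (hflux : ∀ t R φ Z : ℝ, 0 < R →
      dT ψ t R φ Z = R * pb ψ u t R φ Z - F0 * dP u t R φ Z) :
    ∀ t₁ t₂ : ℝ,
      (∫ φ in (0:ℝ)..(2 * π), ∫ q in K, ψ t₁ q.1 φ q.2 / q.1 ^ 2 * q.1)
        = ∫ φ in (0:ℝ)..(2 * π), ∫ q in K, ψ t₂ q.1 φ q.2 / q.1 ^ 2 * q.1 :=
  magnetic_helicity_conservation_general F0 ψ u hψ hu huper K hK hKpos hsupp hflux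
end
end
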